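/- arXiv:2505.22300 — 2 statements merged into one kernel-verified Lean document; each statement's English description precedes it below -/
import Mathlib

section
/- If H is an ℓ-scorpion with at least ℓ+4 vertices, then the tuple (b, t₁, …, t_ℓ, s) of body, tail, and sting witnessing the ℓ-scorpion structure is unique. -/
/-- `p = (b, t₁, …, t_ℓ, s)` witnesses that `G` is an `ℓ`-scorpion:
the entries of `p` are pairwise distinct and induce the path `b–t₁–⋯–t_ℓ–s`,
the body `b = p 0` is adjacent to all vertices outside the path (the legs),
and no other path vertex is adjacent to a leg. -/
def ScorpionTuple {V : Type*} (G : SimpleGraph V) (ℓ : ℕ) (p : Fin (ℓ + 2) → V) : Prop :=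
  Function.Injective p ∧
  (∀ i j : Fin (ℓ + 2), G.Adj (p i) (p j) ↔ (i.val + 1 = j.val ∨ j.val + 1 = i.val)) ∧
  (∀ v : V, v ∉ Set.range p → G.Adj (p 0) v) ∧
  (∀ i : Fin (ℓ + 2), i ≠ 0 → ∀ v : V, v ∉ Set.range p → ¬ G.Adj (p i) v)

/-- `G` is an `ℓ`-scorpion. -/
def IsScorpion {V : Type*} (G : SimpleGraph V) (ℓ : ℕ) : Prop :=
  ∃ p : Fin (ℓ + 2) → V, ScorpionTuple G ℓ p
/-!
Every path vertex other than the body sees only its path neighbours, so it has degree at most 2,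
whereas the body sees `t₁` and at least two legs. If neither body lay on the other's path, `q 1`
would either lie off `p`'s path, making it adjacent to the leg `p 0` of `q`, or be a path vertex
of `p` adjacent to the leg `q 0`, hence `p 0` itself; both are impossible. So one body is a path
vertex of the other tuple, and by the degree count the bodies agree. The path is then recovered
vertex by vertex: `t₁` lies on `p`'s path because `t₂` is not adjacent to the body, and every
later vertex is the remaining path neighbour of its predecessor.
-/

namespace ScorpionTuple

variable {V : Type*} {G : SimpleGraph V} {ℓ : ℕ} {p q : Fin (ℓ + 2) → V}

theorem adj_iff (hp : ScorpionTuple G ℓ p) (i j : Fin (ℓ + 2)) :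
    G.Adj (p i) (p j) ↔ (i.val + 1 = j.val ∨ j.val + 1 = i.val) :=
  hp.2.1 i j

theorem adj_zero_of_notMem_range (hp : ScorpionTuple G ℓ p) {v : V} (hv : v ∉ Set.range p) :
    G.Adj (p 0) v :=
  hp.2.2.1 v hv

theorem eq_zero_of_adj_of_notMem_range (hp : ScorpionTuple G ℓ p) {i : Fin (ℓ + 2)} {v : V}
    (hv : v ∉ Set.range p) (h : G.Adj (p i) v) : i = 0 := by
  by_contra hi
  exact hp.2.2.2 i hi v hv h

theorem mem_range_of_adj (hp : ScorpionTuple G ℓ p) {i : Fin (ℓ + 2)} (hi : i ≠ 0) {v : V}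
    (h : G.Adj (p i) v) : v ∈ Set.range p := by
  by_contra hv
  exact hi (hp.eq_zero_of_adj_of_notMem_range hv h)

theorem exists_eq_of_adj (hp : ScorpionTuple G ℓ p) {i : Fin (ℓ + 2)} (hi : i ≠ 0) {v : V}
    (h : G.Adj (p i) v) : ∃ j, p j = v ∧ (j.val + 1 = i.val ∨ i.val + 1 = j.val) := by
  obtain ⟨j, rfl⟩ := hp.mem_range_of_adj hi h
  exact ⟨j, rfl, ((hp.adj_iff i j).mp h).symm⟩

theorem ncard_neighborSet_le_two (hp : ScorpionTuple G ℓ p) {i : Fin (ℓ + 2)} (hi : i ≠ 0) :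
    (G.neighborSet (p i)).ncard ≤ 2 := by
  set S : Set (Fin (ℓ + 2)) := {j | j.val + 1 = i.val ∨ i.val + 1 = j.val}
  have hsub : G.neighborSet (p i) ⊆ p '' S := by
    intro v hv
    obtain ⟨j, hj, hij⟩ := hp.exists_eq_of_adj hi hv
    exact ⟨j, hij, hj⟩
  have hS : S.ncard ≤ ({i.val - 1, i.val + 1} : Set ℕ).ncard :=
    Set.ncard_le_ncard_of_injOn Fin.val (fun j hj => by simp [S] at hj ⊢; omega)
      Fin.val_injective.injOn
  calc (G.neighborSet (p i)).ncard ≤ (p '' S).ncard := Set.ncard_le_ncard hsub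
    _ ≤ S.ncard := Set.ncard_image_le
    _ ≤ ({i.val - 1, i.val + 1} : Set ℕ).ncard := hS
    _ ≤ 2 := (Set.ncard_insert_le _ _).trans (by simp)

theorem two_lt_ncard_neighborSet_zero [Fintype V] (hp : ScorpionTuple G ℓ p)
    (hcard : ℓ + 4 ≤ Fintype.card V) : 2 < (G.neighborSet (p 0)).ncard := by
  have hlegs : 2 ≤ (Set.range p)ᶜ.ncard := by
    rw [Set.ncard_compl, Set.ncard_range_of_injective hp.1, Nat.card_eq_fintype_card,
      Nat.card_eq_fintype_card, Fintype.card_fin]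
    omega
  have hsub : insert (p 1) (Set.range p)ᶜ ⊆ G.neighborSet (p 0) := by
    rintro v (rfl | hv)
    · exact (hp.adj_iff 0 1).mpr (by simp)
    · exact hp.adj_zero_of_notMem_range hv
  calc 2 < (insert (p 1) (Set.range p)ᶜ).ncard := by
        rw [Set.ncard_insert_of_notMem (by simp)]; omega
    _ ≤ _ := Set.ncard_le_ncard hsub

theorem apply_zero_eq_of_mem_range [Fintype V] (hp : ScorpionTuple G ℓ p)
    (hq : ScorpionTuple G ℓ q) (hcard : ℓ + 4 ≤ Fintype.card V) (h : q 0 ∈ Set.range p) :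
    q 0 = p 0 := by
  obtain ⟨i, hi⟩ := h
  obtain rfl | hi0 := eq_or_ne i 0
  · exact hi.symm
  · have := hq.two_lt_ncard_neighborSet_zero hcard
    rw [← hi] at this
    exact absurd (hp.ncard_neighborSet_le_two hi0) (by omega)

theorem apply_zero_mem_range_or (hp : ScorpionTuple G ℓ p) (hq : ScorpionTuple G ℓ q) :
    q 0 ∈ Set.range p ∨ p 0 ∈ Set.range q := by
  by_contra! ⟨hq0, hp0⟩
  have hq01 : G.Adj (q 1) (q 0) := (hq.adj_iff 1 0).mpr (by simp)
  by_cases hq1 : q 1 ∈ Set.range p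
  · obtain ⟨i, hi⟩ := hq1
    have hi0 : i = 0 := hp.eq_zero_of_adj_of_notMem_range hq0 (hi ▸ hq01)
    exact hp0 ⟨1, by rw [← hi, hi0]⟩
  · have h10 : (1 : Fin (ℓ + 2)) = 0 :=
      hq.eq_zero_of_adj_of_notMem_range hp0 (hp.adj_zero_of_notMem_range hq1).symm
    simp at h10

theorem apply_zero_eq [Fintype V] (hp : ScorpionTuple G ℓ p) (hq : ScorpionTuple G ℓ q)
    (hcard : ℓ + 4 ≤ Fintype.card V) : q 0 = p 0 :=
  (apply_zero_mem_range_or hp hq).elim (apply_zero_eq_of_mem_range hp hq hcard)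
    fun h => (apply_zero_eq_of_mem_range hq hp hcard h).symm

theorem apply_one_mem_range (hl : 1 ≤ ℓ) (hp : ScorpionTuple G ℓ p) (hq : ScorpionTuple G ℓ q)
    (h0 : q 0 = p 0) : q 1 ∈ Set.range p := by
  by_contra hq1
  let two : Fin (ℓ + 2) := ⟨2, by omega⟩
  have hq2 : q two ∈ Set.range p := by
    by_contra hq2
    have := hp.adj_zero_of_notMem_range hq2
    rw [← h0, hq.adj_iff] at this
    simp [two] at this
  obtain ⟨i, hi⟩ := hq2
  have hi0 : i = 0 :=
    hp.eq_zero_of_adj_of_notMem_range hq1 (hi ▸ (hq.adj_iff two 1).mpr (by simp [two]))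
  have : two = 0 := hq.1 (by rw [← hi, hi0, h0])
  simp [two, Fin.ext_iff] at this

theorem apply_succ_eq_of_mem_range (hp : ScorpionTuple G ℓ p) (hq : ScorpionTuple G ℓ q)
    {j : Fin (ℓ + 1)} (ih : ∀ k < j.succ, q k = p k) (h : q j.succ ∈ Set.range p) :
    q j.succ = p j.succ := by
  obtain ⟨i, hi⟩ := h
  have hadj : G.Adj (p i) (p j.castSucc) := by
    rw [hi, ← ih _ Fin.castSucc_lt_succ]
    exact (hq.adj_iff _ _).mpr (by simp)
  rcases (hp.adj_iff _ _).mp hadj with hij | hij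
  · have hlt : i < j.succ := by rw [Fin.lt_def, Fin.val_succ]; simp only [Fin.val_castSucc] at hij; omega
    have := hq.1 (hi.symm.trans (ih i hlt).symm)
    exact absurd (this ▸ hlt) (lt_irrefl _)
  · rw [← hi]
    congr 1
    ext
    simp at hij ⊢
    omega

theorem apply_eq_of_forall_lt [Fintype V] (hl : 1 ≤ ℓ) (hcard : ℓ + 4 ≤ Fintype.card V)
    (hp : ScorpionTuple G ℓ p) (hq : ScorpionTuple G ℓ q) (i : Fin (ℓ + 2))
    (ih : ∀ k < i, q k = p k) : q i = p i := by
  induction i using Fin.cases with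
  | zero => exact apply_zero_eq hp hq hcard
  | succ j =>
    refine apply_succ_eq_of_mem_range hp hq ih ?_
    obtain rfl | hj := eq_or_ne j 0
    · exact apply_one_mem_range hl hp hq (ih 0 (Fin.succ_pos _))
    · have hadj : G.Adj (p j.castSucc) (q j.succ) := by
        rw [← ih _ Fin.castSucc_lt_succ]
        exact (hq.adj_iff _ _).mpr (by simp)
      exact hp.mem_range_of_adj (by simpa using hj) hadj

end ScorpionTuple

/-- The tuple (body, tail, sting) of an `ℓ`-scorpion on `k ≥ ℓ+4` vertices is unique. -/
theorem stmt_3 {V : Type*} [Fintype V] (G : SimpleGraph V)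
    (ℓ : ℕ) (hl : 1 ≤ ℓ) (hcard : ℓ + 4 ≤ Fintype.card V)
    (p q : Fin (ℓ + 2) → V) (hp : ScorpionTuple G ℓ p) (hq : ScorpionTuple G ℓ q) :
    p = q := by
  funext i
  induction i using WellFoundedLT.induction with
  | _ i ih => exact ScorpionTuple.apply_eq_of_forall_lt hl hcard hq hp i ih
end

section
/- For every finite graph G, ℓ ≥ 1 and k ≥ ℓ+4, the number of k-element vertex subsets X such that G[X] is an ℓ-scorpion equals the sum, over all tuples q = (b,t₁,…,t_ℓ,s) of ℓ+2 distinct vertices inducing a path in G in this order, of binomial(X_G(q), k−ℓ−2), where X_G(q) = |N(b) \ (N(t₁) ∪ ⋯ ∪ N(t_ℓ) ∪ N(s))|. -/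
/-- `p` witnesses that the induced subgraph `G[X]` is an `ℓ`-scorpion with body
`p 0`, tail `p 1, …, p ℓ` and sting `p (ℓ+1)`. -/
def ScorpionTupleOn {V : Type*} (G : SimpleGraph V) (ℓ : ℕ)
    (p : Fin (ℓ + 2) → V) (X : Finset V) : Prop :=
  Function.Injective p ∧ (∀ i : Fin (ℓ + 2), p i ∈ X) ∧
  (∀ i j : Fin (ℓ + 2), G.Adj (p i) (p j) ↔ (i.val + 1 = j.val ∨ j.val + 1 = i.val)) ∧
  (∀ v ∈ X, v ∉ Set.range p → G.Adj (p 0) v) ∧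
  (∀ i : Fin (ℓ + 2), i ≠ 0 → ∀ v ∈ X, v ∉ Set.range p → ¬ G.Adj (p i) v)

/-!
In an `ℓ`-scorpion on `X`, `#X ≥ ℓ + 4`, the body is the only vertex of degree at least
`#X - ℓ - 1`: tail and sting have degree at most `2`, and a leg is adjacent only to the body and
to other legs. A second spine with the same body cannot pass through a leg either: that leg would
be its `t₁`, and its `t₂` would be adjacent to a leg but not to the body. So the second spine is
a path from the same start through the same `ℓ + 2` vertices, hence equal to the first. Thus every
scorpion set is counted by exactly one tuple, and the scorpion sets with spine `q` are `range q`
together with any `k - ℓ - 2` of the `X_G(q)` vertices that are adjacent to the body only.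
-/

open Finset

theorem SimpleGraph.pathGraph_hom_apply_eq_self {n : ℕ}
    (σ : SimpleGraph.pathGraph (n + 1) →g SimpleGraph.pathGraph (n + 1))
    (hσ : Function.Injective σ) (h0 : σ 0 = 0) (i : Fin (n + 1)) : σ i = i := by
  obtain ⟨m, hm⟩ := i
  induction m using Nat.strong_induction_on with
  | _ m ih =>
    rcases m with _ | m
    · exact h0
    · have hadj := σ.map_adj (pathGraph_adj.2 (Or.inl rfl) :
        (pathGraph (n + 1)).Adj ⟨m, by omega⟩ ⟨m + 1, hm⟩)
      rw [ih m (by omega) (by omega), pathGraph_adj] at hadj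
      rcases hadj with h | h
      · exact Fin.ext h.symm
      · -- otherwise `σ (m + 1) = m - 1 = σ (m - 1)`
        have hprev := ih (m - 1) (by omega) (by omega)
        have := hσ (show σ ⟨m + 1, hm⟩ = σ ⟨m - 1, by omega⟩ by
          rw [hprev]; exact Fin.ext (by simp only at h ⊢; omega))
        simp only [Fin.mk.injEq] at this
        omega

theorem card_filter_fin_adj_le_two (n a : ℕ) :
    #{m : Fin n | m.val + 1 = a ∨ a + 1 = m.val} ≤ 2 :=
  calc _ ≤ #({a - 1, a + 1} : Finset ℕ) :=
        card_le_card_of_injOn Fin.val (fun m hm => by simp at hm ⊢; omega) Fin.val_injective.injOn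
    _ ≤ 2 := card_le_two

namespace ScorpionTupleOn

variable {V : Type*} {G : SimpleGraph V} {ℓ : ℕ} {p q : Fin (ℓ + 2) → V} {X : Finset V}

section Degree

variable [DecidableEq V]

theorem image_subset (h : ScorpionTupleOn G ℓ p X) : univ.image p ⊆ X := by
  simpa [image_subset_iff] using h.2.1

theorem card_legs_add (h : ScorpionTupleOn G ℓ p X) : #(X \ univ.image p) + (ℓ + 2) = #X := by
  have hP : #(univ.image p) = ℓ + 2 := by simp [card_image_of_injective _ h.1]
  have := card_le_card h.image_subset
  rw [card_sdiff_of_subset h.image_subset]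
  omega

variable [DecidableRel G.Adj]

theorem card_le_degree_body_add (h : ScorpionTupleOn G ℓ p X) :
    #X ≤ #{w ∈ X | G.Adj (p 0) w} + (ℓ + 1) := by
  have hlegs := h.card_legs_add
  obtain ⟨-, hmem, hadj, hbody, -⟩ := h
  have hsub : insert (p 1) (X \ univ.image p) ⊆ {w ∈ X | G.Adj (p 0) w} := by
    intro v hv
    rcases mem_insert.1 hv with rfl | hv
    · exact mem_filter.2 ⟨hmem 1, (hadj 0 1).2 (Or.inl rfl)⟩
    · obtain ⟨hvX, hvp⟩ := mem_sdiff.1 hv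
      exact mem_filter.2 ⟨hvX, hbody v hvX (by simpa using hvp)⟩
  have := card_le_card hsub
  rw [card_insert_of_notMem (by simp)] at this
  omega

theorem degree_tail_le_two (h : ScorpionTupleOn G ℓ p X) {i : Fin (ℓ + 2)} (hi : i ≠ 0) :
    #{w ∈ X | G.Adj (p i) w} ≤ 2 := by
  obtain ⟨-, -, hadj, -, hleg⟩ := h
  have hsub : {w ∈ X | G.Adj (p i) w} ⊆
      image p {m : Fin (ℓ + 2) | m.val + 1 = i.val ∨ i.val + 1 = m.val} := by
    intro w hw
    obtain ⟨hwX, hiw⟩ := mem_filter.1 hw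
    obtain ⟨m, rfl⟩ : w ∈ Set.range p := by_contra fun hw => hleg i hi w hwX hw hiw
    exact mem_image_of_mem p (mem_filter.2 ⟨mem_univ m, ((hadj i m).1 hiw).symm⟩)
  exact (card_le_card hsub).trans (card_image_le.trans (card_filter_fin_adj_le_two _ _))

theorem degree_leg_add_le (h : ScorpionTupleOn G ℓ p X) {v : V} (hvX : v ∈ X)
    (hv : v ∉ Set.range p) : #{w ∈ X | G.Adj v w} + (ℓ + 2) ≤ #X := by
  have hlegs := h.card_legs_add
  obtain ⟨-, hmem, -, -, hleg⟩ := h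
  have hsub : {w ∈ X | G.Adj v w} ⊆ insert (p 0) ((X \ univ.image p).erase v) := by
    intro w hw
    obtain ⟨hwX, hvw⟩ := mem_filter.1 hw
    by_cases hw : w ∈ Set.range p
    · obtain ⟨m, rfl⟩ := hw
      obtain rfl : m = 0 := by_contra fun hm => hleg m hm v hvX hv hvw.symm
      exact mem_insert_self _ _
    · exact mem_insert_of_mem (mem_erase.2 ⟨hvw.ne', mem_sdiff.2 ⟨hwX, by simpa using hw⟩⟩)
  have hvlegs : v ∈ X \ univ.image p := mem_sdiff.2 ⟨hvX, by simpa using hv⟩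
  have := (card_le_card hsub).trans (card_insert_le _ _)
  rw [card_erase_of_mem hvlegs] at this
  have := card_pos.2 ⟨v, hvlegs⟩
  omega

end Degree

theorem body_eq (hp : ScorpionTupleOn G ℓ p X) (hq : ScorpionTupleOn G ℓ q X)
    (hX : ℓ + 4 ≤ #X) : q 0 = p 0 := by
  classical
  have hbody := hq.card_le_degree_body_add
  by_cases hr : q 0 ∈ Set.range p
  · obtain ⟨i, hi⟩ := hr
    by_contra hne
    have := hp.degree_tail_le_two (i := i) (by rintro rfl; exact hne hi.symm)
    rw [hi] at this
    omega
  · have := hp.degree_leg_add_le (hq.2.1 0) hr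
    omega

theorem range_subset (hl : 1 ≤ ℓ) (hp : ScorpionTupleOn G ℓ p X)
    (hq : ScorpionTupleOn G ℓ q X) (h0 : q 0 = p 0) : Set.range q ⊆ Set.range p := by
  obtain ⟨-, -, -, pbody, pleg⟩ := hp
  obtain ⟨qinj, qmem, qadj, -, -⟩ := hq
  rintro _ ⟨i, rfl⟩
  by_contra hi
  have hi1 : i.val = 1 := by
    have := (qadj 0 i).1 (h0 ▸ pbody (q i) (qmem i) hi)
    simp only [Fin.val_zero] at this
    omega
  let two : Fin (ℓ + 2) := ⟨2, by omega⟩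
  have hi2 : G.Adj (q i) (q two) := (qadj i two).2 (Or.inl (by simp [two, hi1]))
  by_cases h2 : q two ∈ Set.range p
  · obtain ⟨m, hm⟩ := h2
    have hm0 : m ≠ 0 := by
      rintro rfl
      have := qinj (hm.symm.trans h0.symm)
      simp [two, Fin.ext_iff] at this
    exact pleg m hm0 (q i) (qmem i) hi (hm ▸ hi2.symm)
  · have := (qadj 0 two).1 (h0 ▸ pbody (q two) (qmem two) h2)
    simp [two] at this

theorem unique (hl : 1 ≤ ℓ) (hp : ScorpionTupleOn G ℓ p X) (hq : ScorpionTupleOn G ℓ q X)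
    (hX : ℓ + 4 ≤ #X) : q = p := by
  have h0 := hp.body_eq hq hX
  choose σ hσ using fun i => hp.range_subset hl hq h0 ⟨i, rfl⟩
  let σ' : SimpleGraph.pathGraph (ℓ + 2) →g SimpleGraph.pathGraph (ℓ + 2) :=
    ⟨σ, fun {i j} hij => by
      rw [SimpleGraph.pathGraph_adj, ← hp.2.2.1, hσ, hσ, hq.2.2.1]
      exact SimpleGraph.pathGraph_adj.1 hij⟩
  have hinj : Function.Injective σ' := fun i j hij =>
    hq.1 (by rw [← hσ, ← hσ]; exact congrArg p hij)
  have hσ0 : σ' 0 = 0 := hp.1 ((hσ 0).trans h0)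
  funext i
  rw [← hσ i]
  exact congrArg p (SimpleGraph.pathGraph_hom_apply_eq_self σ' hinj hσ0 i)

end ScorpionTupleOn

theorem Finset.card_filter_subset_sdiff_subset {α : Type*} [Fintype α] [DecidableEq α]
    {P L : Finset α} (hPL : Disjoint P L) {k : ℕ} (hk : #P ≤ k) :
    #{X : Finset α | #X = k ∧ P ⊆ X ∧ X \ P ⊆ L} = (#L).choose (k - #P) := by
  rw [← card_powersetCard]
  refine card_nbij' (· \ P) (· ∪ P) ?_ ?_ ?_ ?_
  · intro X hX
    obtain ⟨hXk, hPX, hXL⟩ := (mem_filter.1 hX).2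
    exact mem_powersetCard.2 ⟨hXL, by rw [card_sdiff_of_subset hPX, hXk]⟩
  · intro Y hY
    obtain ⟨hYL, hYk⟩ := mem_powersetCard.1 hY
    have hYP : Disjoint Y P := (hPL.mono_right hYL).symm
    refine mem_filter.2 ⟨mem_univ _, ?_, subset_union_right, ?_⟩
    · rw [card_union_of_disjoint hYP, hYk]
      omega
    · rwa [union_sdiff_right, sdiff_eq_self_of_disjoint hYP]
  · intro X hX
    exact sdiff_union_of_subset (mem_filter.1 hX).2.2.1
  · intro Y hY
    exact (union_sdiff_right _ _).trans
      (sdiff_eq_self_of_disjoint (hPL.mono_right (mem_powersetCard.1 hY).1).symm)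

section Count

variable {V : Type*} [Fintype V] [DecidableEq V] (G : SimpleGraph V) [DecidableRel G.Adj]
  {ℓ : ℕ} {p : Fin (ℓ + 2) → V}

/-- Its cardinality is the paper's `X_G(p)`. -/
def legCandidates (p : Fin (ℓ + 2) → V) : Finset V :=
  {v | G.Adj (p 0) v ∧ ∀ i : Fin (ℓ + 2), i ≠ 0 → ¬ G.Adj (p i) v}

variable {G}

theorem scorpionTupleOn_iff (hinj : Function.Injective p)
    (hadj : ∀ i j : Fin (ℓ + 2), G.Adj (p i) (p j) ↔ (i.val + 1 = j.val ∨ j.val + 1 = i.val))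
    (X : Finset V) :
    ScorpionTupleOn G ℓ p X ↔ univ.image p ⊆ X ∧ X \ univ.image p ⊆ legCandidates G p := by
  simp only [ScorpionTupleOn, subset_iff, mem_sdiff, mem_image, mem_univ,
    true_and, legCandidates, mem_filter, not_exists, Set.mem_range]
  grind

theorem disjoint_image_legCandidates (hl : 1 ≤ ℓ)
    (hadj : ∀ i j : Fin (ℓ + 2), G.Adj (p i) (p j) ↔ (i.val + 1 = j.val ∨ j.val + 1 = i.val)) :
    Disjoint (univ.image p) (legCandidates G p) := by
  simp only [disjoint_left, mem_image, mem_univ, true_and, legCandidates, mem_filter]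
  rintro _ ⟨i, rfl⟩ ⟨hi, hnot⟩
  -- `p i` is adjacent to `p 0`, so it is `p 1`, which is adjacent to `p 2`
  have hi1 : i.val = 1 := by
    have := (hadj 0 i).1 hi
    simp only [Fin.val_zero] at this
    omega
  exact hnot ⟨2, by omega⟩ (by simp [Fin.ext_iff]) ((hadj _ i).2 (Or.inr (by simp [hi1])))

open Classical in
theorem card_scorpionTupleOn (hl : 1 ≤ ℓ) {k : ℕ} (hk : ℓ + 2 ≤ k) (hinj : Function.Injective p)
    (hadj : ∀ i j : Fin (ℓ + 2), G.Adj (p i) (p j) ↔ (i.val + 1 = j.val ∨ j.val + 1 = i.val)) :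
    #{X : Finset V | #X = k ∧ ScorpionTupleOn G ℓ p X} =
      (#(legCandidates G p)).choose (k - ℓ - 2) := by
  have hP : #(univ.image p) = ℓ + 2 := by simp [card_image_of_injective _ hinj]
  simp_rw [scorpionTupleOn_iff hinj hadj]
  rw [card_filter_subset_sdiff_subset (disjoint_image_legCandidates hl hadj) (hP.symm ▸ hk), hP,
    Nat.sub_sub]

end Count

open Classical in
/-- The number of `k`-element vertex sets inducing an `ℓ`-scorpion equals the sum,
over all tuples of `ℓ+2` distinct vertices inducing a path in order, of
`choose (X_G(q)) (k - ℓ - 2)`. -/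
theorem stmt_6 {V : Type*} [Fintype V] (G : SimpleGraph V)
    (ℓ : ℕ) (hl : 1 ≤ ℓ) (k : ℕ) (hk : ℓ + 4 ≤ k) :
    {X : Finset V | X.card = k ∧ ∃ p : Fin (ℓ + 2) → V, ScorpionTupleOn G ℓ p X}.ncard
      = ∑ p : Fin (ℓ + 2) → V,
          if (Function.Injective p ∧
              ∀ i j : Fin (ℓ + 2), G.Adj (p i) (p j) ↔ (i.val + 1 = j.val ∨ j.val + 1 = i.val))
          then Nat.choose
            {v : V | G.Adj (p 0) v ∧ ∀ i : Fin (ℓ + 2), i ≠ 0 → ¬ G.Adj (p i) v}.ncard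
            (k - ℓ - 2)
          else 0 := by
  classical
  set B : (Fin (ℓ + 2) → V) → Finset (Finset V) :=
    fun p => {X | #X = k ∧ ScorpionTupleOn G ℓ p X}
  have hB : ((univ : Finset (Fin (ℓ + 2) → V)) : Set _).PairwiseDisjoint B := by
    intro p _ q _ hpq
    refine disjoint_left.2 fun X hXp hXq => hpq ?_
    obtain ⟨hXk, hXp⟩ := (mem_filter.1 hXp).2
    exact (mem_filter.1 hXq).2.2.unique hl hXp (by omega)
  calc _ = #(univ.biUnion B) := by
        rw [← Set.ncard_coe_finset]
        congr 1
        ext X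
        simp [B]
    _ = ∑ p, #(B p) := card_biUnion hB
    _ = _ := by
      refine sum_congr rfl fun p _ => ?_
      split_ifs with hpath
      · rw [card_scorpionTupleOn hl (by omega) hpath.1 hpath.2, ← Set.ncard_coe_finset]
        congr 2
        ext v
        simp [legCandidates]
      · exact card_eq_zero.2 (filter_eq_empty_iff.2 fun X _ hX => hpath ⟨hX.2.1, hX.2.2.2.1⟩)
end
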